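/- Let V be the set of six points (0,0), (1,0), (0,1), (4,5), (5,4), (5,5) in ℝ². Then the set { (x, y) ∈ ℝ² : for all u, v ∈ V, |x·(u₁ − v₁) + y·(u₂ − v₂)| ≤ 1 } is equal to the convex hull of the six points (1/5, 0), (0, 1/5), (−1/2, 1/2), (−1/5, 0), (0, −1/5), (1/2, −1/2). -/

import Mathlib

/-!
The constraints with `u - v ∈ {(5,5), (3,5), (5,3)}` already cut out the hexagon: the rays through
its six vertices split the plane into six sectors, and in each sector a point satisfying these
constraints is a combination of the two bounding vertices with total weight at most `1`, hence
lies in the hull, which contains the origin. Conversely the ball is convex, and each vertex `q`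
of the hexagon lies in it because `⟪q, u⟫` ranges over an interval of length `1` for `u ∈ V`.
-/

open Set

def differenceDualBall (V : Set (ℝ × ℝ)) : Set (ℝ × ℝ) :=
  {p | ∀ u ∈ V, ∀ v ∈ V, |p.1 * (u.1 - v.1) + p.2 * (u.2 - v.2)| ≤ 1}

def alexanderVertices : Set (ℝ × ℝ) := {(0, 0), (1, 0), (0, 1), (4, 5), (5, 4), (5, 5)}

def hexagonVertices : Set (ℝ × ℝ) :=
  {(1/5, 0), (0, 1/5), (-1/2, 1/2), (-1/5, 0), (0, -1/5), (1/2, -1/2)}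

theorem convex_differenceDualBall (V : Set (ℝ × ℝ)) : Convex ℝ (differenceDualBall V) := by
  have hslab : ∀ a b : ℝ, {p : ℝ × ℝ | |p.1 * a + p.2 * b| ≤ 1} =
      (a • LinearMap.fst ℝ ℝ ℝ + b • LinearMap.snd ℝ ℝ ℝ) ⁻¹' Icc (-1) 1 := by
    intro a b
    ext p
    simp [abs_le, mul_comm]
  simp only [differenceDualBall, ofPred_forall]
  exact convex_iInter₂ fun u _ => convex_iInter₂ fun v _ => by
    rw [hslab]
    exact (convex_Icc _ _).linear_preimage _

theorem mem_differenceDualBall_of_forall_mem_Icc {V : Set (ℝ × ℝ)} {q : ℝ × ℝ} (c : ℝ)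
    (h : ∀ u ∈ V, q.1 * u.1 + q.2 * u.2 ∈ Icc c (c + 1)) : q ∈ differenceDualBall V := by
  intro u hu v hv
  obtain ⟨hu₁, hu₂⟩ := h u hu
  obtain ⟨hv₁, hv₂⟩ := h v hv
  rw [abs_le]
  constructor <;> linarith

theorem Convex.smul_add_smul_mem_of_zero_mem {E : Type*} [AddCommGroup E] [Module ℝ E]
    {s : Set E} (hs : Convex ℝ s) (h₀ : (0 : E) ∈ s) {a b : E} (ha : a ∈ s) (hb : b ∈ s)
    {μ ν : ℝ} (hμ : 0 ≤ μ) (hν : 0 ≤ ν) (hμν : μ + ν ≤ 1) : μ • a + ν • b ∈ s := by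
  have := hs.sum_mem (t := Finset.univ) (w := ![μ, ν, 1 - μ - ν]) (z := ![a, b, 0])
    (fun i _ => by fin_cases i <;> simp <;> linarith)
    (by simp [Fin.sum_univ_three])
    (fun i _ => by fin_cases i <;> simpa)
  simpa [Fin.sum_univ_three] using this

theorem hexagonVertices_subset_differenceDualBall :
    hexagonVertices ⊆ differenceDualBall alexanderVertices := by
  intro q hq
  simp only [hexagonVertices, mem_insert_iff, mem_singleton_iff] at hq
  rcases hq with rfl | rfl | rfl | rfl | rfl | rfl
  · exact mem_differenceDualBall_of_forall_mem_Icc 0 (by simp [alexanderVertices]; norm_num)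
  · exact mem_differenceDualBall_of_forall_mem_Icc 0 (by simp [alexanderVertices]; norm_num)
  · exact mem_differenceDualBall_of_forall_mem_Icc (-1/2) (by simp [alexanderVertices]; norm_num)
  · exact mem_differenceDualBall_of_forall_mem_Icc (-1) (by simp [alexanderVertices]; norm_num)
  · exact mem_differenceDualBall_of_forall_mem_Icc (-1) (by simp [alexanderVertices]; norm_num)
  · exact mem_differenceDualBall_of_forall_mem_Icc (-1/2) (by simp [alexanderVertices]; norm_num)

theorem abs_le_of_mem_differenceDualBall_alexanderVertices {x y : ℝ}
    (h : (x, y) ∈ differenceDualBall alexanderVertices) :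
    |5 * x + 5 * y| ≤ 1 ∧ |3 * x + 5 * y| ≤ 1 ∧ |5 * x + 3 * y| ≤ 1 := by
  have h₁ := h (5, 5) (by simp [alexanderVertices]) (0, 0) (by simp [alexanderVertices])
  have h₂ := h (4, 5) (by simp [alexanderVertices]) (1, 0) (by simp [alexanderVertices])
  have h₃ := h (5, 4) (by simp [alexanderVertices]) (0, 1) (by simp [alexanderVertices])
  norm_num at h₁ h₂ h₃
  simpa only [mul_comm] using ⟨h₁, h₂, h₃⟩

theorem mem_convexHull_hexagonVertices {x y : ℝ} (h₁ : |5 * x + 5 * y| ≤ 1)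
    (h₂ : |3 * x + 5 * y| ≤ 1) (h₃ : |5 * x + 3 * y| ≤ 1) :
    (x, y) ∈ convexHull ℝ hexagonVertices := by
  rw [abs_le] at h₁ h₂ h₃
  have hull := convex_convexHull ℝ hexagonVertices
  have vertex := subset_convexHull ℝ hexagonVertices
  have h₀ : ((0, 0) : ℝ × ℝ) ∈ convexHull ℝ hexagonVertices := by
    convert hull (vertex (a := (1/5, 0)) (by simp [hexagonVertices]))
      (vertex (a := (-1/5, 0)) (by simp [hexagonVertices])) (by norm_num : (0 : ℝ) ≤ 1/2)
      (by norm_num : (0 : ℝ) ≤ 1/2) (by norm_num) using 1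
    ext <;> norm_num
  have sector (a b : ℝ × ℝ) (μ ν : ℝ) (hab : (x, y) = μ • a + ν • b)
      (hμ : 0 ≤ μ := by linarith) (hν : 0 ≤ ν := by linarith) (hμν : μ + ν ≤ 1 := by linarith)
      (ha : a ∈ hexagonVertices := by simp [hexagonVertices])
      (hb : b ∈ hexagonVertices := by simp [hexagonVertices]) :
      (x, y) ∈ convexHull ℝ hexagonVertices :=
    hab ▸ hull.smul_add_smul_mem_of_zero_mem h₀ (vertex ha) (vertex hb) hμ hν hμν
  rcases le_total 0 x with hx | hx <;> rcases le_total 0 y with hy | hy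
  · exact sector (1/5, 0) (0, 1/5) (5 * x) (5 * y) (by ext <;> simp <;> ring)
  · rcases le_total 0 (x + y) with hxy | hxy
    · exact sector (1/2, -1/2) (1/5, 0) (-2 * y) (5 * x + 5 * y) (by ext <;> simp <;> ring)
    · exact sector (0, -1/5) (1/2, -1/2) (-5 * x - 5 * y) (2 * x) (by ext <;> simp <;> ring)
  · rcases le_total 0 (x + y) with hxy | hxy
    · exact sector (0, 1/5) (-1/2, 1/2) (5 * x + 5 * y) (-2 * x) (by ext <;> simp <;> ring)
    · exact sector (-1/2, 1/2) (-1/5, 0) (2 * y) (-5 * x - 5 * y) (by ext <;> simp <;> ring)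
  · exact sector (-1/5, 0) (0, -1/5) (-5 * x) (-5 * y) (by ext <;> simp <;> ring)

/-- The unit ball of the Alexander norm (the dual of the Newton polytope with vertex set
`V = {(0,0), (1,0), (0,1), (4,5), (5,4), (5,5)}`) is the hexagon with vertices
`(1/5, 0), (0, 1/5), (−1/2, 1/2), (−1/5, 0), (0, −1/5), (1/2, −1/2)`. -/
theorem alexander_norm_unit_ball :
    let V : Set (ℝ × ℝ) := {(0, 0), (1, 0), (0, 1), (4, 5), (5, 4), (5, 5)}
    {p : ℝ × ℝ | ∀ u ∈ V, ∀ v ∈ V, |p.1 * (u.1 - v.1) + p.2 * (u.2 - v.2)| ≤ 1} =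
      convexHull ℝ
        ({(1/5, 0), (0, 1/5), (-1/2, 1/2), (-1/5, 0), (0, -1/5), (1/2, -1/2)} :
          Set (ℝ × ℝ)) := by
  show differenceDualBall alexanderVertices = convexHull ℝ hexagonVertices
  refine Subset.antisymm ?_ ?_
  · rintro ⟨x, y⟩ hp
    obtain ⟨h₁, h₂, h₃⟩ := abs_le_of_mem_differenceDualBall_alexanderVertices hp
    exact mem_convexHull_hexagonVertices h₁ h₂ h₃
  · exact convexHull_min hexagonVertices_subset_differenceDualBall
      (convex_differenceDualBall alexanderVertices)
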